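/- arXiv:2603.15149 — 6 statements merged into one kernel-verified Lean document; each statement's English description precedes it below -/
import Mathlib

section
/- Deprivation focus (anchored CDFs): if the achievement matrix X' differs from X only in a single cell (i,d) where both x_{id} and x'_{id} are at or above the deprivation cutoff z_d, and the depth scores are computed from a fixed (anchored) reference CDF, then P(X') = P(X). -/
open Finset

/-- The adjusted positional poverty gap index with anchored depth functions
`s j : ℝ → ℝ` (computed from fixed reference CDFs), deprivation cutoffs `z`,
weights `w`, and poverty cutoff `k`. -/
noncomputable def adjP (n D : ℕ) (w z : Fin D → ℝ) (k : ℝ)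
    (s : Fin D → ℝ → ℝ) (x : Fin n → Fin D → ℝ) : ℝ :=
  (1 / n) * ∑ i, ∑ j, w j *
    (if k ≤ ∑ j', w j' * (if x i j' < z j' then 1 else 0) then 1 else 0) *
    (if x i j < z j then 1 else 0) * s j (x i j)

/-- Deprivation focus (anchored CDFs): changing a single cell
`(i,d)` where both the old and new achievements are at or above the cutoff
`z d` leaves the index unchanged. -/
theorem deprivation_focus_anchored
    (n D : ℕ) (hn : 0 < n)
    (w z : Fin D → ℝ) (hw : ∀ j, 0 < w j) (hw1 : ∑ j, w j = 1) (k : ℝ)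
    (F : Fin D → ℝ → ℝ) (m : Fin D → ℝ)
    (hden : ∀ j, 0 < 1 - F j (m j))
    (s : Fin D → ℝ → ℝ)
    (hs : ∀ j t, s j t = (1 - F j t) / (1 - F j (m j)))
    (x x' : Fin n → Fin D → ℝ) (i : Fin n) (d : Fin D)
    (hother : ∀ i' j, (i', j) ≠ (i, d) → x' i' j = x i' j)
    (hxi : z d ≤ x i d) (hxi' : z d ≤ x' i d) :
    adjP n D w z k s x' = adjP n D w z k s x := by
  have hind : ∀ i' j, (if x' i' j < z j then (1:ℝ) else 0) = (if x i' j < z j then 1 else 0) := by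
    intro i' j
    by_cases h : (i', j) = (i, d)
    · obtain ⟨h1, h2⟩ := Prod.mk.injEq .. ▸ h
      subst h1; subst h2
      rw [if_neg (not_lt.2 hxi), if_neg (not_lt.2 hxi')]
    · rw [hother i' j h]
  unfold adjP
  congr 1
  refine Finset.sum_congr rfl fun i' _ => Finset.sum_congr rfl fun j _ => ?_
  have hc : (if k ≤ ∑ j', w j' * (if x' i' j' < z j' then (1:ℝ) else 0) then (1:ℝ) else 0)
      = (if k ≤ ∑ j', w j' * (if x i' j' < z j' then 1 else 0) then 1 else 0) := by
    simp only [hind]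
  rw [hc]
  by_cases h : (i', j) = (i, d)
  · obtain ⟨h1, h2⟩ := Prod.mk.injEq .. ▸ h
    subst h1; subst h2
    rw [if_neg (not_lt.2 hxi), if_neg (not_lt.2 hxi')]
    ring
  · rw [hother i' j h]
end

section
/- Poverty focus (anchored CDFs): if X' differs from X only in the achievements of a single person i⋆ who is non-poor in both X and X' (ρ_{i⋆}(k) = ρ'_{i⋆}(k) = 0), and depth scores are computed from a fixed reference CDF, then P(X') = P(X). -/
open Finset

/-- Poverty focus (anchored CDFs): if `X'` differs from `X` only
in the achievements of a single person `i⋆` who is non-poor in both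
(`c_{i⋆} < k` and `c'_{i⋆} < k`), then `P(X') = P(X)`. -/
theorem poverty_focus_anchored
    (n D : ℕ) (hn : 0 < n)
    (w z : Fin D → ℝ) (hw : ∀ j, 0 < w j) (hw1 : ∑ j, w j = 1) (k : ℝ)
    (F : Fin D → ℝ → ℝ) (m : Fin D → ℝ)
    (hden : ∀ j, 0 < 1 - F j (m j))
    (s : Fin D → ℝ → ℝ)
    (hs : ∀ j t, s j t = (1 - F j t) / (1 - F j (m j)))
    (x x' : Fin n → Fin D → ℝ) (istar : Fin n)
    (hother : ∀ i j, i ≠ istar → x' i j = x i j)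
    (hc : (∑ j, w j * (if x istar j < z j then 1 else 0)) < k)
    (hc' : (∑ j, w j * (if x' istar j < z j then 1 else 0)) < k) :
    adjP n D w z k s x' = adjP n D w z k s x := by
  unfold adjP
  congr 1
  apply Finset.sum_congr rfl
  intro i _
  by_cases h : i = istar
  · subst h
    rw [if_neg (not_le.mpr hc'), if_neg (not_le.mpr hc)]
    simp
  · have hx : ∀ j, x' i j = x i j := fun j => hother i j h
    simp [hx]
end

section
/- Own-person monotonicity, case (i): with anchored CDFs, if a poor individual's achievement in a deprived indicator d strictly worsens while remaining deprived (x'_{id} < x_{id} < z_d), then the individual's poverty degree weakly increases: P'_i ≥ P_i, with P'_i − P_i = w_d(s'_{id} − s_{id}) ≥ 0. -/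
open Finset

/-- Own-person monotonicity, case (i), anchored CDFs: if a poor
individual's achievement in a deprived indicator `d` strictly worsens while
remaining deprived (`x' d < x d < z d`), then the individual's poverty degree
satisfies `P'_i - P_i = w_d (s(x'_d) - s(x_d)) ≥ 0`, hence `P_i ≤ P'_i`. -/
theorem own_person_monotonicity_still_deprived
    (D : ℕ) (w z : Fin D → ℝ) (hw : ∀ j, 0 < w j) (hw1 : ∑ j, w j = 1)
    (F : Fin D → ℝ → ℝ) (hFmono : ∀ j, Monotone (F j))
    (m : Fin D → ℝ) (hden : ∀ j, 0 < 1 - F j (m j))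
    (s : Fin D → ℝ → ℝ)
    (hs : ∀ j t, s j t = (1 - F j t) / (1 - F j (m j)))
    (x x' : Fin D → ℝ) (d : Fin D)
    (hother : ∀ j, j ≠ d → x' j = x j)
    (hworse : x' d < x d) (hdep : x d < z d)
    (Pi Pi' : ℝ)
    (hPi : Pi = ∑ j, w j * (if x j < z j then 1 else 0) * s j (x j))
    (hPi' : Pi' = ∑ j, w j * (if x' j < z j then 1 else 0) * s j (x' j)) :
    Pi' - Pi = w d * (s d (x' d) - s d (x d)) ∧
    0 ≤ w d * (s d (x' d) - s d (x d)) ∧ Pi ≤ Pi' := by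
  have hxd : x d < z d := hdep
  have hx'd : x' d < z d := lt_trans hworse hdep
  have hdiff : Pi' - Pi = w d * (s d (x' d) - s d (x d)) := by
    rw [hPi, hPi', ← Finset.sum_sub_distrib]
    rw [Finset.sum_eq_single d]
    · simp [if_pos hxd, if_pos hx'd]; ring
    · intro j _ hj
      rw [hother j hj]; ring
    · intro h; exact absurd (Finset.mem_univ d) h
  have hsge : s d (x d) ≤ s d (x' d) := by
    rw [hs, hs]
    have := hFmono d hworse.le
    exact div_le_div_of_nonneg_right (by linarith) (hden d).le
  have hnn : 0 ≤ w d * (s d (x' d) - s d (x d)) :=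
    mul_nonneg (hw d).le (by linarith)
  exact ⟨hdiff, hnn, by linarith [hdiff]⟩
end

section
/- Dimensional monotonicity under anchored CDFs: if X' is obtained from X by changing only cell (i,d) from non-deprived to deprived (x'_{id} < z_d ≤ x_{id}), then P(X') ≥ P(X); if additionally individual i is poor after the change (ρ'_i(k) = 1) and s'_{id} > 0, the inequality is strict, with increase at least (1/n)·w_d·s'_{id}·ρ'_i(k). -/
open Finset

/-- Dimensional monotonicity under anchored CDFs: changing only
cell `(i,d)` from non-deprived to deprived (`x'_{id} < z_d ≤ x_{id}`) weakly
increases the index, the increase is at least `(1/n) w_d s_d(x'_{id}) ρ'_i(k)`,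
and it is strict if `i` is poor after the change and `s_d(x'_{id}) > 0`. -/
theorem dimensional_monotonicity_anchored
    (n D : ℕ) (hn : 0 < n)
    (w z : Fin D → ℝ) (hw : ∀ j, 0 < w j) (hw1 : ∑ j, w j = 1) (k : ℝ)
    (s : Fin D → ℝ → ℝ)
    (hs01 : ∀ j t, 0 ≤ s j t ∧ s j t ≤ 1)
    (x x' : Fin n → Fin D → ℝ) (i : Fin n) (d : Fin D)
    (hother : ∀ i' j, (i', j) ≠ (i, d) → x' i' j = x i' j)
    (hnew : x' i d < z d) (hold : z d ≤ x i d)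
    (ρ' : ℝ)
    (hρ' : ρ' = if k ≤ ∑ j, w j * (if x' i j < z j then 1 else 0) then 1 else 0) :
    adjP n D w z k s x ≤ adjP n D w z k s x' ∧
    (1 / n) * w d * s d (x' i d) * ρ' ≤ adjP n D w z k s x' - adjP n D w z k s x ∧
    (ρ' = 1 → 0 < s d (x' i d) → adjP n D w z k s x < adjP n D w z k s x') := by
  classical
  set f : (Fin n → Fin D → ℝ) → Fin n → ℝ := fun y i' => ∑ j, w j *
    (if k ≤ ∑ j', w j' * (if y i' j' < z j' then 1 else 0) then 1 else 0) *
    (if y i' j < z j then 1 else 0) * s j (y i' j) with hf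
  have hrow : ∀ j, j ≠ d → x' i j = x i j := fun j hj => hother i j (by simp [hj])
  have hnotold : ¬ x i d < z d := not_lt.mpr hold
  have hcc : (∑ j, w j * (if x i j < z j then 1 else 0)) ≤
      ∑ j, w j * (if x' i j < z j then 1 else 0) := by
    apply Finset.sum_le_sum
    intro j _
    by_cases hjd : j = d
    · rw [hjd]
      simp only [hnew, hnotold, if_true, if_false, mul_zero, mul_one]
      exact (hw d).le
    · rw [hrow j hjd]
  set ρ : ℝ := if k ≤ ∑ j, w j * (if x i j < z j then 1 else 0) then 1 else 0 with hρ
  have hρle : ρ ≤ ρ' := by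
    rw [hρ, hρ']
    by_cases h : k ≤ ∑ j, w j * (if x i j < z j then 1 else 0)
    · rw [if_pos h, if_pos (h.trans hcc)]
    · rw [if_neg h]
      split <;> norm_num
  have hρ'nn : 0 ≤ ρ' := by rw [hρ']; split <;> norm_num
  -- pointwise nonnegativity of term differences for row i
  have hterm : ∀ j ∈ Finset.univ, (0:ℝ) ≤
      (w j * ρ' * (if x' i j < z j then 1 else 0) * s j (x' i j)) -
      (w j * ρ * (if x i j < z j then 1 else 0) * s j (x i j)) := by
    intro j _
    by_cases hjd : j = d
    · rw [hjd]
      simp only [hnew, hnotold, if_true, if_false, mul_zero, zero_mul, mul_one, sub_zero]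
      exact mul_nonneg (mul_nonneg (hw d).le hρ'nn) (hs01 d (x' i d)).1
    · rw [hrow j hjd]
      have h1 := (hs01 j (x i j)).1
      have h2 : (0:ℝ) ≤ (if x i j < z j then (1:ℝ) else 0) := by split <;> norm_num
      have h3 := mul_nonneg (mul_nonneg (mul_nonneg (hw j).le h2) h1) (sub_nonneg.mpr hρle)
      nlinarith [h3]
  have hfd : f x' i - f x i =
      ∑ j, ((w j * ρ' * (if x' i j < z j then 1 else 0) * s j (x' i j)) -
      (w j * ρ * (if x i j < z j then 1 else 0) * s j (x i j))) := by
    simp only [hf]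
    rw [← Finset.sum_sub_distrib]
    apply Finset.sum_congr rfl
    intro j _
    rw [hρ']
  have key : w d * ρ' * s d (x' i d) ≤ f x' i - f x i := by
    rw [hfd]
    have hd : (w d * ρ' * (if x' i d < z d then 1 else 0) * s d (x' i d)) -
        (w d * ρ * (if x i d < z d then 1 else 0) * s d (x i d)) =
        w d * ρ' * s d (x' i d) := by
      simp [hnew, hnotold]
    calc w d * ρ' * s d (x' i d)
        = (w d * ρ' * (if x' i d < z d then 1 else 0) * s d (x' i d)) -
        (w d * ρ * (if x i d < z d then 1 else 0) * s d (x i d)) := hd.symm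
      _ ≤ _ := Finset.single_le_sum hterm (Finset.mem_univ d)
  have hrows : ∀ i' ∈ Finset.univ, i' ≠ i → f x' i' - f x i' = 0 := by
    intro i' _ hi'
    have hx : ∀ j, x' i' j = x i' j := fun j => hother i' j (by simp [hi'])
    simp only [hf, sub_eq_zero]
    apply Finset.sum_congr rfl
    intro j _
    simp only [hx]
  have hsum : adjP n D w z k s x' - adjP n D w z k s x =
      (1 / n) * (f x' i - f x i) := by
    unfold adjP
    rw [← mul_sub, ← Finset.sum_sub_distrib]
    congr 1
    rw [Finset.sum_eq_single_of_mem i (Finset.mem_univ i)]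
    intro b _ hb
    exact hrows b (Finset.mem_univ b) hb
  have hninv : (0:ℝ) < 1 / n := by positivity
  have hs0 := (hs01 d (x' i d)).1
  have hwd := hw d
  have hmain : (1 / n) * w d * s d (x' i d) * ρ' ≤
      adjP n D w z k s x' - adjP n D w z k s x := by
    rw [hsum]
    have h4 : w d * s d (x' i d) * ρ' ≤ f x' i - f x i := by
      calc w d * s d (x' i d) * ρ' = w d * ρ' * s d (x' i d) := by ring
        _ ≤ _ := key
    calc (1 / n) * w d * s d (x' i d) * ρ' = (1 / n) * (w d * s d (x' i d) * ρ') := by ring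
      _ ≤ (1 / n) * (f x' i - f x i) := by
          exact mul_le_mul_of_nonneg_left h4 hninv.le
  have hLnn : (0:ℝ) ≤ (1 / n) * w d * s d (x' i d) * ρ' :=
    mul_nonneg (mul_nonneg (mul_nonneg hninv.le hwd.le) hs0) hρ'nn
  refine ⟨by linarith, hmain, ?_⟩
  intro h1 h2
  rw [h1, mul_one] at hmain
  have : (0:ℝ) < (1 / n) * w d * s d (x' i d) :=
    mul_pos (mul_pos hninv hwd) h2
  linarith
end

section
/- Population subgroup decomposability (anchored CDFs): if the population is partitioned into m disjoint subgroups of sizes n^ℓ, then the overall index equals the population-share-weighted mean of subgroup indices: P(X) = Σ_ℓ (n^ℓ/n) · P(X^ℓ), where each subgroup index is computed with the same fixed reference CDFs, cutoffs, and weights. -/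
open Finset

/-- Population subgroup decomposability (anchored CDFs): if the
population is partitioned into `m` disjoint nonempty subgroups, the overall
index equals the population-share-weighted mean of the subgroup indices,
where each individual's contribution `Σ_j w_j g¹_{ij}(k)` depends only on the
individual's own row. -/
theorem subgroup_decomposability_anchored
    (n m d : ℕ) (hn : 0 < n)
    (w : Fin d → ℝ) (hw : ∀ j, 0 < w j) (hw1 : ∑ j, w j = 1)
    (g1 : Fin n → Fin d → ℝ)
    (S : Fin m → Finset (Fin n))
    (hdisj : ∀ ℓ ℓ', ℓ ≠ ℓ' → Disjoint (S ℓ) (S ℓ'))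
    (hcover : ∀ i : Fin n, ∃ ℓ, i ∈ S ℓ)
    (hne : ∀ ℓ, (S ℓ).Nonempty)
    (P : ℝ) (hP : P = (1 / n) * ∑ i, ∑ j, w j * g1 i j)
    (Psub : Fin m → ℝ)
    (hPsub : ∀ ℓ, Psub ℓ = (1 / ((S ℓ).card : ℝ)) * ∑ i ∈ S ℓ, ∑ j, w j * g1 i j) :
    P = ∑ ℓ, (((S ℓ).card : ℝ) / n) * Psub ℓ := by
  have huniv : (Finset.univ : Finset (Fin n)) = Finset.univ.biUnion S := by
    ext i
    simp only [Finset.mem_univ, Finset.mem_biUnion, true_iff]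
    obtain ⟨ℓ, hℓ⟩ := hcover i
    exact ⟨ℓ, trivial, hℓ⟩
  have hsplit : ∑ i, (∑ j, w j * g1 i j) = ∑ ℓ, ∑ i ∈ S ℓ, ∑ j, w j * g1 i j := by
    rw [huniv, Finset.sum_biUnion]
    intro ℓ _ ℓ' _ h
    exact hdisj ℓ ℓ' h
  have hcard : ∀ ℓ, ((S ℓ).card : ℝ) ≠ 0 :=
    fun ℓ => Nat.cast_ne_zero.mpr (hne ℓ).card_pos.ne'
  rw [hP, hsplit, Finset.mul_sum]
  refine Finset.sum_congr rfl fun ℓ _ => ?_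
  rw [hPsub ℓ]
  field_simp
end

section
/- Failure of weak transfer for CDF-based depth scores: there exist a population x : Fin n → ℝ, an indicator cutoff z, and two deprived individuals a, b with x a < x b < z, together with an equalizing rank-preserving transfer producing x' with x'_a > x_a, x'_b < x_b, x'_a + x'_b = x_a + x_b, x'_a ≤ x'_b < z, such that the sum of positional depth scores (computed from an anchored reference CDF with density rising over the deprived range) strictly increases: s'(x'_a) + s'(x'_b) > s(x_a) + s(x_b). -/
open Finset

/-- Failure of weak transfer for CDF-based depth scores: there
exist a population, a cutoff `z`, two deprived individuals `a, b` with
`x a < x b < z`, and an equalizing rank-preserving (Pigou–Dalton) transfer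
producing `x'` with `x' a > x a`, `x' b < x b`, `x' a + x' b = x a + x b`,
`x' a ≤ x' b < z` (all other entries unchanged), together with an anchored
monotone reference CDF `F` and minimum `m` with `1 - F m > 0`, such that the
total positional depth strictly increases:
`s (x' a) + s (x' b) > s (x a) + s (x b)` where `s t = (1 - F t)/(1 - F m)`. -/
theorem weak_transfer_fails_for_positional_depth :
    ∃ (n : ℕ) (x x' : Fin n → ℝ) (z : ℝ) (a b : Fin n) (F : ℝ → ℝ) (m : ℝ),
      0 < n ∧ a ≠ b ∧ Monotone F ∧ (∀ t, 0 ≤ F t ∧ F t ≤ 1) ∧ 0 < 1 - F m ∧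
      x a < x b ∧ x b < z ∧
      x a < x' a ∧ x' b < x b ∧ x' a + x' b = x a + x b ∧
      x' a ≤ x' b ∧ x' b < z ∧
      (∀ c, c ≠ a → c ≠ b → x' c = x c) ∧
      (1 - F (x a)) / (1 - F m) + (1 - F (x b)) / (1 - F m)
        < (1 - F (x' a)) / (1 - F m) + (1 - F (x' b)) / (1 - F m) := by
  refine ⟨2, ![0, 2], ![1, 1], 3, 0, 1, fun t => if t < 2 then 0 else 1/2, 0,
    by norm_num, by decide, ?_, ?_, by norm_num, by norm_num, by norm_num,
    by norm_num, by norm_num, by norm_num, by norm_num, by norm_num, ?_, by norm_num⟩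
  · intro s t hst
    by_cases hs : s < 2 <;> by_cases ht : t < 2 <;> simp [hs, ht] <;> linarith
  · intro t
    by_cases ht : t < 2 <;> simp [ht] <;> norm_num
  · intro c hc0 hc1
    fin_cases c <;> simp_all
end
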